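/- Kähler angle well-definedness and characterization: on ℂⁿ with standard metric and symplectic form ω, for every oriented real (2n−2)-dimensional subspace Π, the quantity (1/(n−1)!)·ω^{n−1}|_Π / Ω_Π lies in [−1, 1], where Ω_Π is the volume form of the induced metric with the given orientation. Hence the Kähler angle θ(Π) = arccos of this quantity is well-defined in [0, π]. Moreover Π is a symplectic subspace (ω|_Π nondegenerate with compatible orientation) if and only if θ(Π) < π/2 — for n = 2 this reads: a 2-plane Π ⊂ ℂ² satisfies |ω|_Π| ≤ Ω_Π (Wirtinger's inequality), with equality iff Π is a complex line. -/
import Mathlib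


/-- The standard Kähler (symplectic) form `ω = dx₁∧dy₁ + dx₂∧dy₂` on `ℂ²`. -/
def omegaK (p q : ℂ × ℂ) : ℝ :=
  (p.1.re * q.1.im - p.1.im * q.1.re) + (p.2.re * q.2.im - p.2.im * q.2.re)

/-- The Euclidean inner product on `ℂ² ≅ ℝ⁴`. -/
def gEucl (p q : ℂ × ℂ) : ℝ :=
  p.1.re * q.1.re + p.1.im * q.1.im + p.2.re * q.2.re + p.2.im * q.2.im

set_option maxHeartbeats 2000000 in
/-- (Wirtinger's inequality; well-definedness of the Kähler angle, case `n = 2`.)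
For any orthonormal pair `(e₁, e₂)` in `ℂ² ≅ ℝ⁴`, `|ω(e₁, e₂)| ≤ 1` — so
`cos θ(Π) = ω|_Π / Ω_Π ∈ [−1,1]` and the Kähler angle `θ(Π) = arccos(ω(e₁,e₂))` of the
oriented plane `Π = span(e₁,e₂)` is well-defined in `[0, π]` — with equality
`|ω(e₁,e₂)| = 1` iff `e₂ = ±J e₁`, i.e. iff `Π` is a complex line. -/
theorem stmt_17 (e₁ e₂ : ℂ × ℂ)
    (h₁ : gEucl e₁ e₁ = 1) (h₂ : gEucl e₂ e₂ = 1) (horth : gEucl e₁ e₂ = 0) :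
    |omegaK e₁ e₂| ≤ 1 ∧
      (|omegaK e₁ e₂| = 1 ↔ (e₂ = Complex.I • e₁ ∨ e₂ = -(Complex.I • e₁))) := by
  have mpr : (e₂ = Complex.I • e₁ ∨ e₂ = -(Complex.I • e₁)) → |omegaK e₁ e₂| = 1 := by
    rintro (rfl | rfl) <;>
      simp only [omegaK, gEucl] at h₁ ⊢ <;>
      simp only [Prod.smul_fst, Prod.smul_snd, Prod.fst_neg, Prod.snd_neg, smul_eq_mul,
        Complex.neg_re, Complex.neg_im, Complex.mul_re, Complex.mul_im,
        Complex.I_re, Complex.I_im, one_mul, zero_mul, mul_one, mul_zero,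
        sub_zero, zero_sub, zero_add, add_zero, neg_neg, mul_neg, neg_mul] <;>
      rw [abs_eq zero_le_one]
    · left; linear_combination h₁
    · right; linear_combination -h₁
  obtain ⟨z1, z2⟩ := e₁
  obtain ⟨w1, w2⟩ := e₂
  simp only [omegaK, gEucl] at *
  set a := z1.re with ha; set b := z1.im with hb
  set c := z2.re with hc; set d := z2.im with hd
  set p := w1.re with hp; set q := w1.im with hq
  set r := w2.re with hr; set s := w2.im with hs
  have key1 : (p + b)^2 + (q - a)^2 + (r + d)^2 + (s - c)^2
      = 2 - 2 * ((a * q - b * p) + (c * s - d * r)) := by ring_nf; nlinarith [h₁, h₂]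
  have key2 : (p - b)^2 + (q + a)^2 + (r - d)^2 + (s + c)^2
      = 2 + 2 * ((a * q - b * p) + (c * s - d * r)) := by ring_nf; nlinarith [h₁, h₂]
  constructor
  · rw [abs_le]
    constructor
    · linarith [key2, sq_nonneg (p - b), sq_nonneg (q + a), sq_nonneg (r - d), sq_nonneg (s + c)]
    · linarith [key1, sq_nonneg (p + b), sq_nonneg (q - a), sq_nonneg (r + d), sq_nonneg (s - c)]
  · constructor
    · intro h
      rcases (abs_eq (by norm_num : (0:ℝ) ≤ 1)).mp h with h1 | h1
      · left
        have hz : ((a * q - b * p) + (c * s - d * r)) = 1 := h1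
        have e1 : p = -b := by nlinarith [key1, sq_nonneg (q - a), sq_nonneg (r + d), sq_nonneg (s - c), sq_nonneg (p + b)]
        have e2 : q = a := by nlinarith [key1, sq_nonneg (p + b), sq_nonneg (r + d), sq_nonneg (s - c), sq_nonneg (q - a)]
        have e3 : r = -d := by nlinarith [key1, sq_nonneg (p + b), sq_nonneg (q - a), sq_nonneg (s - c), sq_nonneg (r + d)]
        have e4 : s = c := by nlinarith [key1, sq_nonneg (p + b), sq_nonneg (q - a), sq_nonneg (r + d), sq_nonneg (s - c)]
        refine Prod.ext ?_ ?_ <;> apply Complex.ext <;>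
          simp [Complex.mul_re, Complex.mul_im, ← ha, ← hb, ← hc, ← hd, ← hp, ← hq, ← hr, ← hs,
            e1, e2, e3, e4]
      · right
        have hz : ((a * q - b * p) + (c * s - d * r)) = -1 := h1
        have e1 : p = b := by nlinarith [key2, sq_nonneg (q + a), sq_nonneg (r - d), sq_nonneg (s + c), sq_nonneg (p - b)]
        have e2 : q = -a := by nlinarith [key2, sq_nonneg (p - b), sq_nonneg (r - d), sq_nonneg (s + c), sq_nonneg (q + a)]
        have e3 : r = d := by nlinarith [key2, sq_nonneg (p - b), sq_nonneg (q + a), sq_nonneg (s + c), sq_nonneg (r - d)]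
        have e4 : s = -c := by nlinarith [key2, sq_nonneg (p - b), sq_nonneg (q + a), sq_nonneg (r - d), sq_nonneg (s + c)]
        refine Prod.ext ?_ ?_ <;> apply Complex.ext <;>
          simp [Complex.mul_re, Complex.mul_im, ← ha, ← hb, ← hc, ← hd, ← hp, ← hq, ← hr, ← hs,
            e1, e2, e3, e4]
    · exact mpr
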